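/- Fix ε > 0, β ∈ (0,1), an even integer d > 4(e^{2ε}−1)²·ln(2/β), and n ε-private randomizers R_1,…,R_n from [d] to a countable message set 𝒴. If H is sampled uniformly among subsets of [d] of size d/2, then with probability at least 5/6 over the choice of H: for every i ∈ [n], Pr[ R_i(U) ∈ Leak(v, H, R_i) ] < 6βn, where v = (e^{2ε}−1)·√((4/d)·ln(2/β)). -/

import Mathlib

/-!
For a fixed message `y`, write `a x = Pr[R(x) = y]` and `A = Pr[R(U) = y]`. Privacy gives
`|a x - A| ≤ (e^ε - 1) A`, and since the bound on `d` forces `v ≤ 1`, `y` can only be `v`-leaky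
for `H` if `∑_{x ∈ H} (a x - A)`, whose mean over `H` is `0`, exceeds `|H| v A / 2` in absolute
value. A Hoeffding bound for sampling half of `[d]` without replacement makes this happen for at
most a `β`-fraction of the `H`; its moment generating function is controlled by induction on
`|H|`, pairing a fixed point with each other point. Averaging over `y` bounds the mean of
`Pr[R_i(U) ∈ Leak(v, H, R_i)]` over `H` by `β`, and Markov's inequality together with a union
bound over `i` gives the claim.
-/

open scoped Classical

/-- `probU R S y` is the probability that a sample from `R(U_S)` (draw `x`
uniformly from `S`, then sample a message from `R x`) equals `y`, where
`R x y` is the probability that randomizer `R` on input `x` outputs `y`. -/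
noncomputable def probU {d : ℕ} {Y : Type*} (R : Fin d → Y → ℝ)
    (S : Finset (Fin d)) (y : Y) : ℝ :=
  (∑ x ∈ S, R x y) / (S.card : ℝ)

/-- A message `y` is `v`-leaky with respect to `H, R` if
`|ln (Pr[R(U_H) = y] / Pr[R(U) = y])| > v`. -/
noncomputable def leaky {d : ℕ} {Y : Type*} (R : Fin d → Y → ℝ)
    (H : Finset (Fin d)) (v : ℝ) (y : Y) : Prop :=
  v < |Real.log (probU R H y / probU R Finset.univ y)|

/-- `probLeak R S H v` is `Pr[R(U_S) ∈ Leak(v, H, R)]`, the probability that a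
sample from `R(U_S)` lands in the set of `v`-leaky messages w.r.t. `H, R`. -/
noncomputable def probLeak {d : ℕ} {Y : Type*} (R : Fin d → Y → ℝ)
    (S H : Finset (Fin d)) (v : ℝ) : ℝ :=
  ∑' y : Y, if leaky R H v y then probU R S y else 0

open Finset Real

namespace Finset

variable {ι R : Type*} [CommSemiring R]

noncomputable def esymm (s : Finset ι) (k : ℕ) (w : ι → R) : R :=
  ∑ H ∈ s.powersetCard k, ∏ x ∈ H, w x

variable [DecidableEq ι]

lemma esymm_insert_succ {u : ι} {t : Finset ι} (hu : u ∉ t) (k : ℕ) (w : ι → R) :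
    (insert u t).esymm (k + 1) w = t.esymm (k + 1) w + w u * t.esymm k w := by
  have hnot : ∀ H ∈ t.powersetCard k, u ∉ H := fun H hH h ↦ hu ((mem_powersetCard.1 hH).1 h)
  have hdisj : Disjoint (t.powersetCard (k + 1)) ((t.powersetCard k).image (insert u)) := by
    refine disjoint_left.2 fun H h₁ h₂ ↦ ?_
    obtain ⟨H', -, rfl⟩ := mem_image.1 h₂
    exact hu ((mem_powersetCard.1 h₁).1 (mem_insert_self u H'))
  have hinj : Set.InjOn (insert u) (t.powersetCard k : Set (Finset ι)) := fun H₁ h₁ H₂ h₂ he ↦ by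
    rw [mem_coe] at h₁ h₂
    simpa [erase_insert (hnot H₁ h₁), erase_insert (hnot H₂ h₂)] using congrArg (erase · u) he
  rw [esymm, powersetCard_succ_insert hu, sum_union hdisj, sum_image hinj, esymm, esymm,
    mul_sum]
  exact congrArg _ (sum_congr rfl fun H hH ↦ prod_insert (hnot H hH))

lemma sum_esymm_erase (t : Finset ι) (k : ℕ) (w : ι → R) :
    ∑ v ∈ t, (t.erase v).esymm k w = (#t - k) • t.esymm k w := by
  have hswap : ∑ v ∈ t, ∑ H ∈ (t.erase v).powersetCard k, ∏ x ∈ H, w x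
      = ∑ H ∈ t.powersetCard k, ∑ _v ∈ t \ H, ∏ x ∈ H, w x := by
    refine sum_comm' fun v H ↦ ?_
    simp only [mem_powersetCard, mem_sdiff, subset_erase]
    tauto
  simp only [esymm, hswap, sum_const, smul_sum]
  refine sum_congr rfl fun H hH ↦ ?_
  rw [mem_powersetCard] at hH
  rw [card_sdiff_of_subset hH.1, hH.2]

lemma sum_mul_esymm_erase (t : Finset ι) (k : ℕ) (w : ι → R) :
    ∑ v ∈ t, w v * (t.erase v).esymm k w = (k + 1) • t.esymm (k + 1) w := by
  calc ∑ v ∈ t, w v * (t.erase v).esymm k w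
      = ∑ v ∈ t, ∑ H ∈ t.powersetCard (k + 1) with v ∈ H, ∏ x ∈ H, w x := by
        refine sum_congr rfl fun v hv ↦ ?_
        rw [esymm, mul_sum]
        refine sum_nbij' (insert v) (erase · v) ?_ ?_ ?_ ?_ ?_
        · intro H hH
          simp only [mem_filter, mem_powersetCard, subset_erase] at hH ⊢
          refine ⟨⟨insert_subset hv hH.1.1, ?_⟩, mem_insert_self v H⟩
          rw [card_insert_of_notMem hH.1.2, hH.2]
        · intro H hH
          simp only [mem_filter, mem_powersetCard] at hH ⊢
          refine ⟨erase_subset_erase v hH.1.1, ?_⟩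
          rw [card_erase_of_mem hH.2, hH.1.2, Nat.add_sub_cancel]
        · intro H hH
          simp only [mem_powersetCard, subset_erase] at hH
          exact erase_insert hH.1.2
        · intro H hH
          rw [mem_filter] at hH
          exact insert_erase hH.2
        · intro H hH
          simp only [mem_powersetCard, subset_erase] at hH
          rw [prod_insert hH.1.2]
    _ = ∑ H ∈ t.powersetCard (k + 1), ∑ _v ∈ H, ∏ x ∈ H, w x := by
        refine sum_comm' fun v H ↦ ?_
        simp only [mem_filter, mem_powersetCard]
        exact ⟨fun h ↦ ⟨h.2.2, h.2.1⟩, fun h ↦ ⟨h.2.1 h.1, h.2, h.1⟩⟩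
    _ = (k + 1) • t.esymm (k + 1) w := by
        simp only [esymm, smul_sum, sum_const]
        exact sum_congr rfl fun H hH ↦ by rw [(mem_powersetCard.1 hH).2]

lemma succ_nsmul_esymm_insert {u : ι} {t : Finset ι} (hu : u ∉ t) {k : ℕ} (ht : #t = 2 * k + 1)
    (w : ι → R) :
    (k + 1) • (insert u t).esymm (k + 1) w = ∑ v ∈ t, (w u + w v) * (t.erase v).esymm k w := by
  simp only [add_mul, sum_add_distrib, ← mul_sum, sum_esymm_erase, sum_mul_esymm_erase, ht,
    esymm_insert_succ hu, show 2 * k + 1 - k = k + 1 by omega, mul_smul_comm, smul_add]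
  ring

end Finset

lemma exp_add_exp_le {p q c : ℝ} (hp : |p| ≤ c) (hq : |q| ≤ c) :
    exp p + exp q ≤ 2 * exp ((p + q) / 2 + c ^ 2 / 2) := by
  have hcosh : exp p + exp q = 2 * exp ((p + q) / 2) * cosh ((p - q) / 2) := by
    have hp' : exp p = exp ((p + q) / 2) * exp ((p - q) / 2) := by rw [← exp_add]; ring_nf
    have hq' : exp q = exp ((p + q) / 2) * exp (-((p - q) / 2)) := by rw [← exp_add]; ring_nf
    rw [cosh_eq, hp', hq']
    ring
  have hsq : ((p - q) / 2) ^ 2 ≤ c ^ 2 := by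
    refine sq_le_sq' ?_ ?_ <;> linarith [abs_le.1 hp, abs_le.1 hq]
  calc exp p + exp q = 2 * exp ((p + q) / 2) * cosh ((p - q) / 2) := hcosh
    _ ≤ 2 * exp ((p + q) / 2) * exp (c ^ 2 / 2) := by
        gcongr
        exact (cosh_le_exp_half_sq _).trans (exp_le_exp.2 (by linarith))
    _ = 2 * exp ((p + q) / 2 + c ^ 2 / 2) := by rw [exp_add, mul_assoc]

section Concentration

variable {ι : Type*} [DecidableEq ι]

-- `s.esymm m (exp ∘ B)` is `centralBinom m` times the moment generating function of
-- `∑ x ∈ H, B x` for `H` uniform among the `m`-subsets of `s`.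
theorem esymm_exp_le {c : ℝ} {B : ι → ℝ} (m : ℕ) {s : Finset ι} (hs : #s = 2 * m)
    (hB : ∀ x ∈ s, |B x| ≤ c) :
    s.esymm m (fun x ↦ exp (B x))
      ≤ m.centralBinom * exp ((∑ x ∈ s, B x) / 2 + m * (c ^ 2 / 2)) := by
  induction m generalizing s with
  | zero =>
    obtain rfl : s = ∅ := card_eq_zero.1 hs
    simp [esymm]
  | succ m ih =>
    obtain ⟨u, t, hu, rfl, ht⟩ := card_eq_succ.1 (hs.trans (by ring) : #s = 2 * m + 1 + 1)
    set E := exp ((∑ x ∈ insert u t, B x) / 2 + (m + 1 : ℕ) * (c ^ 2 / 2)) with hE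
    have hterm : ∀ v ∈ t, (exp (B u) + exp (B v)) * (t.erase v).esymm m (fun x ↦ exp (B x))
        ≤ 2 * m.centralBinom * E := by
      intro v hv
      have hsum : ∑ x ∈ insert u t, B x = B u + B v + ∑ x ∈ t.erase v, B x := by
        rw [sum_insert hu, ← add_sum_erase t B hv, add_assoc]
      calc (exp (B u) + exp (B v)) * (t.erase v).esymm m (fun x ↦ exp (B x))
          ≤ 2 * exp ((B u + B v) / 2 + c ^ 2 / 2) *
              (m.centralBinom * exp ((∑ x ∈ t.erase v, B x) / 2 + m * (c ^ 2 / 2))) := by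
            gcongr
            · exact sum_nonneg fun H _ ↦ prod_nonneg fun x _ ↦ (exp_pos _).le
            · exact exp_add_exp_le (hB u (mem_insert_self u t))
                (hB v (mem_insert_of_mem hv))
            · exact ih (by rw [card_erase_of_mem hv, ht]; omega)
                fun x hx ↦ hB x (mem_insert_of_mem (mem_of_mem_erase hx))
        _ = 2 * m.centralBinom * E := by
            rw [mul_mul_mul_comm, ← exp_add, hE, hsum]
            push_cast
            ring_nf
    have hrec : ((m + 1 : ℕ) : ℝ) * (insert u t).esymm (m + 1) (fun x ↦ exp (B x))
        ≤ ((m + 1 : ℕ) : ℝ) * ((m + 1).centralBinom * E) := by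
      have hC : ((m : ℝ) + 1) * (m + 1).centralBinom = 2 * (2 * m + 1) * m.centralBinom := by
        exact_mod_cast Nat.succ_mul_centralBinom_succ m
      calc ((m + 1 : ℕ) : ℝ) * (insert u t).esymm (m + 1) (fun x ↦ exp (B x))
          = ∑ v ∈ t, (exp (B u) + exp (B v)) * (t.erase v).esymm m (fun x ↦ exp (B x)) := by
            rw [← nsmul_eq_mul, succ_nsmul_esymm_insert hu ht]
        _ ≤ #t • (2 * m.centralBinom * E) := sum_le_card_nsmul _ _ _ hterm
        _ = ((m + 1 : ℕ) : ℝ) * ((m + 1).centralBinom * E) := by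
            rw [nsmul_eq_mul, ht]
            push_cast
            linear_combination (-E) * hC
    exact le_of_mul_le_mul_left hrec (by positivity)

theorem card_powersetCard_sum_ge_le {c t : ℝ} {b : ι → ℝ} {m : ℕ} {s : Finset ι}
    (hs : #s = 2 * m) (hc : 0 < c) (hb : ∀ x ∈ s, |b x| ≤ c) (hsum : ∑ x ∈ s, b x = 0)
    (ht : 0 ≤ t) :
    (#{H ∈ s.powersetCard m | t ≤ ∑ x ∈ H, b x} : ℝ)
      ≤ m.centralBinom * exp (-(t ^ 2 / (2 * m * c ^ 2))) := by
  -- the optimal Chernoff parameter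
  set l := t / (m * c ^ 2)
  have hl : 0 ≤ l := by positivity
  have hexp : -(l * t) + (∑ x ∈ s, l * b x) / 2 + m * ((l * c) ^ 2 / 2)
      = -(t ^ 2 / (2 * m * c ^ 2)) := by
    rw [← mul_sum, hsum]
    rcases eq_or_ne m 0 with rfl | hm
    · simp [l]
    · simp only [l]
      field_simp
      ring
  calc (#{H ∈ s.powersetCard m | t ≤ ∑ x ∈ H, b x} : ℝ)
      = ∑ H ∈ s.powersetCard m, if t ≤ ∑ x ∈ H, b x then 1 else 0 := by
        rw [← sum_boole]
    _ ≤ ∑ H ∈ s.powersetCard m, exp (-(l * t)) * ∏ x ∈ H, exp (l * b x) := by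
        refine sum_le_sum fun H _ ↦ ?_
        rw [← exp_sum, ← exp_add, ← mul_sum]
        split_ifs with h
        · exact one_le_exp (by nlinarith)
        · exact (exp_pos _).le
    _ = exp (-(l * t)) * s.esymm m (fun x ↦ exp (l * b x)) := by rw [esymm, mul_sum]
    _ ≤ exp (-(l * t)) *
          (m.centralBinom * exp ((∑ x ∈ s, l * b x) / 2 + m * ((l * c) ^ 2 / 2))) := by
        gcongr
        refine esymm_exp_le m hs fun x hx ↦ ?_
        rw [abs_mul, abs_of_nonneg hl]
        exact mul_le_mul_of_nonneg_left (hb x hx) hl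
    _ = m.centralBinom * exp (-(t ^ 2 / (2 * m * c ^ 2))) := by
        rw [← hexp, add_assoc, exp_add (-(l * t))]
        ring

theorem card_powersetCard_abs_sum_ge_le {c t : ℝ} {b : ι → ℝ} {m : ℕ} {s : Finset ι}
    (hs : #s = 2 * m) (hc : 0 < c) (hb : ∀ x ∈ s, |b x| ≤ c) (hsum : ∑ x ∈ s, b x = 0)
    (ht : 0 ≤ t) :
    (#{H ∈ s.powersetCard m | t ≤ |∑ x ∈ H, b x|} : ℝ)
      ≤ 2 * m.centralBinom * exp (-(t ^ 2 / (2 * m * c ^ 2))) := by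
  have hneg := card_powersetCard_sum_ge_le (b := fun x ↦ -b x) hs hc (by simpa using hb)
    (by simp [sum_neg_distrib, hsum]) ht
  simp only [sum_neg_distrib] at hneg
  simp only [le_abs, filter_or]
  calc (#({H ∈ s.powersetCard m | t ≤ ∑ x ∈ H, b x} ∪
          {H ∈ s.powersetCard m | t ≤ -∑ x ∈ H, b x}) : ℝ)
      ≤ #{H ∈ s.powersetCard m | t ≤ ∑ x ∈ H, b x} +
          #{H ∈ s.powersetCard m | t ≤ -∑ x ∈ H, b x} := by exact_mod_cast card_union_le _ _
    _ ≤ 2 * m.centralBinom * exp (-(t ^ 2 / (2 * m * c ^ 2))) := by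
        linarith [card_powersetCard_sum_ge_le hs hc hb hsum ht]

end Concentration

lemma half_lt_abs_sub_one_of_lt_abs_log {ρ v : ℝ} (hv₀ : 0 ≤ v) (hv₁ : v ≤ 1)
    (h : v < |log ρ|) : v / 2 < |ρ - 1| := by
  rcases le_or_gt ρ 0 with hρ | hρ
  · rw [abs_of_nonpos (by linarith)]
    linarith
  rcases lt_abs.1 h with h | h
  · have : exp v < ρ := (lt_log_iff_exp_lt hρ).1 h
    rw [abs_of_pos (by linarith [add_one_le_exp v])]
    linarith [add_one_le_exp v]
  · have : ρ * exp v < 1 := by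
      rw [← exp_log hρ, ← exp_add, exp_lt_one_iff]
      linarith
    rw [abs_sub_comm, abs_of_pos (by nlinarith [add_one_le_exp v])]
    nlinarith [add_one_le_exp v]

/-- The threshold `v` of the theorem. -/
noncomputable def leakThreshold (ε β : ℝ) (d : ℕ) : ℝ :=
  (exp (2 * ε) - 1) * √(4 / d * log (2 / β))

section LeakThreshold

variable {ε β : ℝ} {d : ℕ}

lemma log_two_div_nonneg (hβ₀ : 0 < β) (hβ₂ : β ≤ 2) : 0 ≤ log (2 / β) :=
  log_nonneg (by rw [le_div_iff₀ hβ₀]; linarith)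

lemma leakThreshold_nonneg (hε : 0 ≤ ε) : 0 ≤ leakThreshold ε β d :=
  mul_nonneg (sub_nonneg.2 (one_le_exp (by linarith))) (sqrt_nonneg _)

lemma leakThreshold_sq (hβ₀ : 0 < β) (hβ₂ : β ≤ 2) :
    leakThreshold ε β d ^ 2 = (exp (2 * ε) - 1) ^ 2 * (4 * log (2 / β) / d) := by
  rw [leakThreshold, mul_pow,
    sq_sqrt (mul_nonneg (by positivity) (log_two_div_nonneg hβ₀ hβ₂)), div_mul_eq_mul_div]

lemma leakThreshold_le_one (hε : 0 ≤ ε) (hβ₀ : 0 < β) (hβ₂ : β ≤ 2)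
    (hd : 4 * (exp (2 * ε) - 1) ^ 2 * log (2 / β) < d) : leakThreshold ε β d ≤ 1 := by
  have hd0 : (0 : ℝ) < d := lt_of_le_of_lt
    (mul_nonneg (by positivity) (log_two_div_nonneg hβ₀ hβ₂)) hd
  refine (pow_le_one_iff_of_nonneg (leakThreshold_nonneg hε) two_ne_zero).1 ?_
  rw [leakThreshold_sq hβ₀ hβ₂, mul_div_assoc', div_le_one hd0]
  linarith

lemma exp_neg_leakThreshold_le {A : ℝ} {m : ℕ} (hε : 0 < ε) (hβ₀ : 0 < β) (hβ₂ : β ≤ 2)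
    (hm : (m : ℝ) ≠ 0) (hA : A ≠ 0) :
    exp (-((m * leakThreshold ε β (m + m) * A / 2) ^ 2 / (2 * m * ((exp ε - 1) * A) ^ 2)))
      ≤ β / 2 := by
  have hε₁ : exp ε - 1 ≠ 0 := (sub_pos.2 (one_lt_exp_iff.2 hε)).ne'
  have hexponent : (m * leakThreshold ε β (m + m) * A / 2) ^ 2 / (2 * m * ((exp ε - 1) * A) ^ 2)
      = (exp ε + 1) ^ 2 * log (2 / β) / 4 := by
    field_simp
    rw [leakThreshold_sq hβ₀ hβ₂, show exp (2 * ε) = exp ε ^ 2 by rw [← exp_nat_mul]; norm_num]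
    push_cast
    field_simp
    ring
  calc _ ≤ exp (-log (2 / β)) := by
        rw [exp_le_exp, hexponent, neg_le_neg_iff]
        have h4 : 4 ≤ (exp ε + 1) ^ 2 := by nlinarith [one_lt_exp_iff.2 hε]
        nlinarith [mul_le_mul_of_nonneg_right h4 (log_two_div_nonneg hβ₀ hβ₂)]
    _ = β / 2 := by rw [exp_neg, exp_log (by positivity), inv_div]

end LeakThreshold

section Randomizer

variable {d : ℕ} {Y : Type*}

lemma probU_nonneg {Q : Fin d → Y → ℝ} {y : Y} (h0 : ∀ x, 0 ≤ Q x y) (S : Finset (Fin d)) :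
    0 ≤ probU Q S y :=
  div_nonneg (sum_nonneg fun x _ ↦ h0 x) (Nat.cast_nonneg _)

lemma sum_sub_probU_eq_zero {Q : Fin d → Y → ℝ} {y : Y} (S : Finset (Fin d)) :
    ∑ x ∈ S, (Q x y - probU Q S y) = 0 := by
  rcases S.eq_empty_or_nonempty with rfl | hS
  · simp
  rw [sum_sub_distrib, sum_const, nsmul_eq_mul, probU,
    mul_div_cancel₀ _ (by exact_mod_cast hS.card_pos.ne'), sub_self]

lemma abs_sub_probU_le {ε : ℝ} {Q : Fin d → Y → ℝ} {y : Y} (h0 : ∀ x, 0 ≤ Q x y)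
    (hpriv : ∀ x x', Q x y ≤ exp ε * Q x' y) {S : Finset (Fin d)} {x : Fin d} (hx : x ∈ S) :
    |Q x y - probU Q S y| ≤ (exp ε - 1) * probU Q S y := by
  have hS : (0 : ℝ) < #S := by exact_mod_cast card_pos.2 ⟨x, hx⟩
  have hA := probU_nonneg h0 S
  have hub : Q x y ≤ exp ε * probU Q S y := by
    rw [probU, mul_div_assoc', le_div_iff₀ hS, mul_sum]
    simpa [mul_comm] using card_nsmul_le_sum S _ _ fun x' _ ↦ hpriv x x'
  have hlb : probU Q S y ≤ exp ε * Q x y := by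
    rw [probU, div_le_iff₀ hS]
    simpa [mul_comm] using sum_le_card_nsmul S _ _ fun x' _ ↦ hpriv x' x
  have hK := exp_pos ε
  rw [abs_le]
  constructor <;> nlinarith [mul_nonneg hA (sq_nonneg (exp ε - 1))]

-- `leaky` divides by `Pr[R(U) = y]`; when it vanishes, `x / 0 = 0` and `log 0 = 0`.
lemma not_leaky_of_probU_eq_zero {Q : Fin d → Y → ℝ} {y : Y} {v : ℝ} {H : Finset (Fin d)}
    (hv : 0 ≤ v) (hA : probU Q univ y = 0) : ¬ leaky Q H v y := by
  rw [leaky, hA, div_zero, log_zero, abs_zero, not_lt]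
  exact hv

lemma le_abs_sum_sub_probU_of_leaky {Q : Fin d → Y → ℝ} {y : Y} {v : ℝ} {H : Finset (Fin d)}
    (hA : 0 < probU Q univ y) (hv₀ : 0 ≤ v) (hv₁ : v ≤ 1) (hH : H.Nonempty)
    (h : leaky Q H v y) :
    #H * v * probU Q univ y / 2 ≤ |∑ x ∈ H, (Q x y - probU Q univ y)| := by
  have hHA : (0 : ℝ) < #H * probU Q univ y := mul_pos (by exact_mod_cast hH.card_pos) hA
  have hratio : probU Q H y / probU Q univ y - 1
      = (∑ x ∈ H, (Q x y - probU Q univ y)) / (#H * probU Q univ y) := by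
    rw [probU, sum_sub_distrib, sum_const, nsmul_eq_mul]
    field_simp
  have := half_lt_abs_sub_one_of_lt_abs_log hv₀ hv₁ h
  rw [hratio, abs_div, abs_of_pos hHA, lt_div_iff₀ hHA] at this
  linarith

theorem card_leaky_le {ε β : ℝ} {Q : Fin d → Y → ℝ} {y : Y} (hε : 0 < ε) (hβ₀ : 0 < β)
    (hβ₂ : β ≤ 2) (hd : Even d) (hd2 : 4 * (exp (2 * ε) - 1) ^ 2 * log (2 / β) < d)
    (h0 : ∀ x, 0 ≤ Q x y) (hpriv : ∀ x x', Q x y ≤ exp ε * Q x' y) :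
    (#{H ∈ (univ : Finset (Fin d)).powersetCard (d / 2) | leaky Q H (leakThreshold ε β d) y} : ℝ)
      ≤ β * #((univ : Finset (Fin d)).powersetCard (d / 2)) := by
  obtain ⟨m, rfl⟩ := hd
  rw [show (m + m) / 2 = m by omega]
  set 𝓗 : Finset (Finset (Fin (m + m))) := univ.powersetCard m
  set v := leakThreshold ε β (m + m)
  set A := probU Q univ y
  have hv₀ : 0 ≤ v := leakThreshold_nonneg hε.le
  rcases (probU_nonneg h0 univ).eq_or_lt with hA | hA
  · rw [filter_false_of_mem fun H _ ↦ not_leaky_of_probU_eq_zero hv₀ hA.symm, card_empty,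
      Nat.cast_zero]
    positivity
  have hm : (0 : ℝ) < m := by
    have : (0 : ℝ) < ((m + m : ℕ) : ℝ) :=
      lt_of_le_of_lt (mul_nonneg (by positivity) (log_two_div_nonneg hβ₀ hβ₂)) hd2
    push_cast at this
    linarith
  set t := m * v * A / 2
  have hleaky : {H ∈ 𝓗 | leaky Q H v y} ⊆ {H ∈ 𝓗 | t ≤ |∑ x ∈ H, (Q x y - A)|} := by
    refine monotone_filter_right _ fun H hH hleak ↦ ?_
    have hHm : #H = m := (mem_powersetCard.1 hH).2
    have hH : H.Nonempty := card_pos.1 (by rw [hHm]; exact_mod_cast hm)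
    simpa [t, hHm] using le_abs_sum_sub_probU_of_leaky hA hv₀
      (leakThreshold_le_one hε.le hβ₀ hβ₂ hd2) hH hleak
  have hcount := card_powersetCard_abs_sum_ge_le (s := univ) (b := fun x ↦ Q x y - A)
    (by rw [card_univ, Fintype.card_fin, two_mul])
    (mul_pos (sub_pos.2 (one_lt_exp_iff.2 hε)) hA) (fun x hx ↦ abs_sub_probU_le h0 hpriv hx)
    (sum_sub_probU_eq_zero univ) (by positivity : 0 ≤ t)
  have hN : (#𝓗 : ℝ) = m.centralBinom := by
    rw [card_powersetCard, card_univ, Fintype.card_fin, Nat.centralBinom_eq_two_mul_choose,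
      two_mul]
  calc (#{H ∈ 𝓗 | leaky Q H v y} : ℝ)
      ≤ #{H ∈ 𝓗 | t ≤ |∑ x ∈ H, (Q x y - A)|} := by exact_mod_cast card_le_card hleaky
    _ ≤ 2 * m.centralBinom * (β / 2) :=
        hcount.trans (by gcongr; exact exp_neg_leakThreshold_le hε hβ₀ hβ₂ (by positivity) hA.ne')
    _ = β * #𝓗 := by rw [hN]; ring

lemma summable_of_tsum_eq_one {f : Y → ℝ} (h : ∑' y, f y = 1) : Summable f := by
  by_contra hf
  rw [tsum_eq_zero_of_not_summable hf] at h
  exact zero_ne_one h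

lemma summable_probU {R : Fin d → Y → ℝ} (hR1 : ∀ x, ∑' y, R x y = 1) (S : Finset (Fin d)) :
    Summable (probU R S) :=
  (summable_sum fun x _ ↦ summable_of_tsum_eq_one (hR1 x)).div_const _

lemma tsum_probU {R : Fin d → Y → ℝ} (hR1 : ∀ x, ∑' y, R x y = 1) {S : Finset (Fin d)}
    (hS : S.Nonempty) : ∑' y, probU R S y = 1 := by
  simp only [probU, tsum_div_const,
    Summable.tsum_finsetSum fun x _ ↦ summable_of_tsum_eq_one (hR1 x), hR1, sum_const,
    nsmul_eq_mul, mul_one]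
  exact div_self (by exact_mod_cast hS.card_pos.ne')

lemma probLeak_nonneg {R : Fin d → Y → ℝ} (hR0 : ∀ x y, 0 ≤ R x y) (S H : Finset (Fin d))
    (v : ℝ) : 0 ≤ probLeak R S H v :=
  tsum_nonneg fun y ↦ by split_ifs <;> simp [probU_nonneg fun x ↦ hR0 x y]

theorem sum_probLeak_le {R : Fin d → Y → ℝ} (hR0 : ∀ x y, 0 ≤ R x y)
    (hR1 : ∀ x, ∑' y, R x y = 1) {S : Finset (Fin d)} (hS : S.Nonempty)
    {𝓗 : Finset (Finset (Fin d))} {v B : ℝ}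
    (hcount : ∀ y, (#{H ∈ 𝓗 | leaky R H v y} : ℝ) ≤ B) :
    ∑ H ∈ 𝓗, probLeak R S H v ≤ B := by
  have hP := summable_probU hR1 S
  have hP0 : ∀ y, 0 ≤ probU R S y := fun y ↦ probU_nonneg (fun x ↦ hR0 x y) S
  have hsummable : ∀ H, Summable fun y ↦ if leaky R H v y then probU R S y else 0 :=
    fun H ↦ hP.of_nonneg_of_le (fun y ↦ by split_ifs <;> simp [hP0 y])
      (fun y ↦ by split_ifs <;> simp [hP0 y])
  have hswap : ∀ y, ∑ H ∈ 𝓗, (if leaky R H v y then probU R S y else 0)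
      = (#{H ∈ 𝓗 | leaky R H v y} : ℝ) * probU R S y := fun y ↦ by
    rw [← sum_filter, sum_const, nsmul_eq_mul]
  calc ∑ H ∈ 𝓗, probLeak R S H v
      = ∑' y, (#{H ∈ 𝓗 | leaky R H v y} : ℝ) * probU R S y := by
        rw [← tsum_congr hswap, Summable.tsum_finsetSum fun H _ ↦ hsummable H]
        rfl
    _ ≤ ∑' y, B * probU R S y :=
        Summable.tsum_le_tsum (fun y ↦ mul_le_mul_of_nonneg_right (hcount y) (hP0 y))
          ((summable_sum fun H _ ↦ hsummable H).congr hswap) (hP.mul_left B)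
    _ = B := by rw [tsum_mul_left, tsum_probU hR1 hS, mul_one]

end Randomizer

lemma card_filter_nsmul_le_sum {α M : Type*} [AddCommMonoid M] [PartialOrder M]
    [IsOrderedAddMonoid M] {s : Finset α} {f : α → M} (hf : ∀ a ∈ s, 0 ≤ f a) (t : M) :
    #{a ∈ s | t ≤ f a} • t ≤ ∑ a ∈ s, f a :=
  (card_nsmul_le_sum _ f t fun _ ha ↦ (mem_filter.1 ha).2).trans
    (sum_le_sum_of_subset_of_nonneg (filter_subset _ s) fun a ha _ ↦ hf a ha)

theorem card_filter_exists_ge_le {ι α : Type*} [Fintype ι] {s : Finset α} {f : ι → α → ℝ}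
    {a k : ℝ} (ha : 0 < a) (hk : 0 < k) (hf₀ : ∀ i, ∀ H ∈ s, 0 ≤ f i H)
    (hf : ∀ i, ∑ H ∈ s, f i H ≤ a * #s) :
    (#{H ∈ s | ∃ i, k * a * Fintype.card ι ≤ f i H} : ℝ) ≤ #s / k := by
  have hmarkov (i : ι) : (#{H ∈ s | k * a * Fintype.card ι ≤ f i H} : ℝ)
      ≤ #s / (k * Fintype.card ι) := by
    have hι : (0 : ℝ) < Fintype.card ι := by exact_mod_cast Fintype.card_pos_iff.2 ⟨i⟩
    have := (card_filter_nsmul_le_sum (hf₀ i) (k * a * Fintype.card ι)).trans (hf i)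
    rw [nsmul_eq_mul] at this
    rw [le_div_iff₀ (by positivity)]
    nlinarith
  have hunion : {H ∈ s | ∃ i, k * a * Fintype.card ι ≤ f i H}
      ⊆ univ.biUnion fun i ↦ {H ∈ s | k * a * Fintype.card ι ≤ f i H} := by
    intro H hH
    simp only [mem_filter, mem_biUnion, mem_univ, true_and] at hH ⊢
    exact hH.2.imp fun i hi ↦ ⟨hH.1, hi⟩
  calc (#{H ∈ s | ∃ i, k * a * Fintype.card ι ≤ f i H} : ℝ)
      ≤ ∑ i, (#{H ∈ s | k * a * Fintype.card ι ≤ f i H} : ℝ) := by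
        exact_mod_cast (card_le_card hunion).trans card_biUnion_le
    _ ≤ ∑ _i : ι, #s / (k * Fintype.card ι) := sum_le_sum fun i _ ↦ hmarkov i
    _ ≤ #s / k := by
        rw [sum_const, card_univ, nsmul_eq_mul]
        rcases (Fintype.card ι).eq_zero_or_pos with h | h
        · rw [h, Nat.cast_zero, zero_mul]
          positivity
        · exact le_of_eq (by field_simp)

theorem stmt_6_general {Y : Type*} (ε β : ℝ) (n d : ℕ)
    (hε : 0 < ε) (hβ : β ∈ Set.Ioo (0 : ℝ) 1) (hd : Even d)
    (hd2 : 4 * (Real.exp (2 * ε) - 1) ^ 2 * Real.log (2 / β) < (d : ℝ))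
    (R : Fin n → Fin d → Y → ℝ)
    (hR0 : ∀ i x y, 0 ≤ R i x y) (hR1 : ∀ i x, ∑' y, R i x y = 1)
    (hpriv : ∀ i x x' y, R i x y ≤ Real.exp ε * R i x' y) :
    5 / 6 ≤
      (((Finset.powersetCard (d / 2) (Finset.univ : Finset (Fin d))).filter
          (fun H => ∀ i : Fin n,
            probLeak (R i) Finset.univ H
              ((Real.exp (2 * ε) - 1) * Real.sqrt (4 / (d : ℝ) * Real.log (2 / β)))
              < 6 * β * n)).card : ℝ)
        / ((Finset.powersetCard (d / 2) (Finset.univ : Finset (Fin d))).card : ℝ) := by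
  obtain ⟨hβ₀, hβ₁⟩ := hβ
  rw [show (Real.exp (2 * ε) - 1) * Real.sqrt (4 / (d : ℝ) * Real.log (2 / β))
    = leakThreshold ε β d from rfl]
  set 𝓗 := (univ : Finset (Fin d)).powersetCard (d / 2)
  have hd₀ : 0 < d := by
    have := log_pos (by rw [lt_div_iff₀ hβ₀]; linarith : (1 : ℝ) < 2 / β)
    have := one_lt_exp_iff.2 (by linarith : 0 < 2 * ε)
    have : (0 : ℝ) < d := lt_of_le_of_lt (by positivity) hd2
    exact_mod_cast this
  have hN : (0 : ℝ) < #𝓗 := by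
    rw [card_powersetCard, card_univ, Fintype.card_fin]
    exact_mod_cast Nat.choose_pos (Nat.div_le_self d 2)
  have hleak (i : Fin n) : ∑ H ∈ 𝓗, probLeak (R i) univ H (leakThreshold ε β d) ≤ β * #𝓗 :=
    sum_probLeak_le (hR0 i) (hR1 i) (univ_nonempty_iff.2 ⟨⟨0, hd₀⟩⟩) fun y ↦
      card_leaky_le hε hβ₀ (by linarith) hd hd2 (fun x ↦ hR0 i x y) fun x x' ↦ hpriv i x x' y
  have hbad : (#{H ∈ 𝓗 | ∃ i, 6 * β * n ≤ probLeak (R i) univ H (leakThreshold ε β d)} : ℝ)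
      ≤ #𝓗 / 6 := by
    simpa using card_filter_exists_ge_le (k := 6) hβ₀ (by norm_num)
      (fun i H _ ↦ probLeak_nonneg (hR0 i) univ H _) hleak
  have hsplit : (#{H ∈ 𝓗 | ∀ i, probLeak (R i) univ H (leakThreshold ε β d) < 6 * β * n} : ℝ)
      + #{H ∈ 𝓗 | ∃ i, 6 * β * n ≤ probLeak (R i) univ H (leakThreshold ε β d)} = #𝓗 := by
    simp only [← not_lt, ← not_forall]
    exact_mod_cast card_filter_add_card_filter_not _
  rw [le_div_iff₀ hN]
  linarith

/-- for `ε > 0`, `β ∈ (0,1)`, even `d > 4(e^{2ε}-1)² ln(2/β)`, and `n`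
`ε`-private randomizers `R_1,…,R_n` from `[d]` to a countable `𝒴`: if `H` is
uniform among size-`d/2` subsets of `[d]`, then with probability at least `5/6`
over `H`, for every `i ∈ [n]`,
`Pr[R_i(U) ∈ Leak((e^{2ε}-1)√((4/d) ln(2/β)), H, R_i)] < 6βn`. -/
theorem stmt_6 {Y : Type*} [Countable Y] (ε β : ℝ) (n d : ℕ)
    (hε : 0 < ε) (hβ : β ∈ Set.Ioo (0 : ℝ) 1) (hd : Even d)
    (hd2 : 4 * (Real.exp (2 * ε) - 1) ^ 2 * Real.log (2 / β) < (d : ℝ))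
    (R : Fin n → Fin d → Y → ℝ)
    (hR0 : ∀ i x y, 0 ≤ R i x y) (hR1 : ∀ i x, ∑' y, R i x y = 1)
    (hpriv : ∀ i x x' y, R i x y ≤ Real.exp ε * R i x' y) :
    5 / 6 ≤
      (((Finset.powersetCard (d / 2) (Finset.univ : Finset (Fin d))).filter
          (fun H => ∀ i : Fin n,
            probLeak (R i) Finset.univ H
              ((Real.exp (2 * ε) - 1) * Real.sqrt (4 / (d : ℝ) * Real.log (2 / β)))
              < 6 * β * n)).card : ℝ)
        / ((Finset.powersetCard (d / 2) (Finset.univ : Finset (Fin d))).card : ℝ) :=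
  stmt_6_general ε β n d hε hβ hd hd2 R hR0 hR1 hpriv
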